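/- For every fixed τ ∈ ℝ, v_{Δ,τ} → Γ Σ Γ^⊤ entrywise as Δ → ∞, where Γ = (Id−K)^{-1}; and for every fixed τ ≠ 0, v_{Δ,τ} → 0 entrywise as Δ → 0. -/

import Mathlib

/-!
The measure `Id δ₀ + ψ(s) ds` has total mass `Σₙ Kⁿ = (Id − K)⁻¹ = Γ`: the integral of the
`n`-fold convolution `φₙ` is `Kⁿ`, because Lebesgue integrals of convolutions on the half-line
factor (Tonelli and translation invariance), and the Neumann series converges because the
spectral radius of `K` is below one (Gelfand's formula). Each entry of `v_{Δ,τ}` is a combination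
of integrals of the tent `(1 − |t − s − τ|/Δ)⁺` against products of these finite measures. As
`Δ → ∞` the tent tends to `1`, so dominated convergence gives the product of the masses, that is
`Γ Σ Γᵀ`; as `Δ → 0` it tends to `0` off the line `t − s = τ`, which is null for the product
measure when `τ ≠ 0` since `0` is the only atom of these measures.
-/

open MeasureTheory Set Filter Topology

noncomputable section

/-- `phiIter d φ n` is the `(n+1)`-fold convolution `φ_{n+1}` of the kernel matrix:
`φ_1 = φ` and `φ_{n+1}(t) = ∫_0^t φ(t−s) φ_n(s) ds`. -/
def phiIter (d : ℕ) (φ : Fin d → Fin d → ℝ → ℝ) : ℕ → Fin d → Fin d → ℝ → ℝ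
  | 0 => φ
  | n + 1 => fun i j t => ∑ k, ∫ s in Ioc (0 : ℝ) t, φ i k (t - s) * phiIter d φ n k j s

/-- `ψ = Σ_{n ≥ 1} φ_n`. -/
def psiFun (d : ℕ) (φ : Fin d → Fin d → ℝ → ℝ) (i j : Fin d) (t : ℝ) : ℝ :=
  ∑' n, phiIter d φ n i j t

/-- The matrix `K = ∫_0^∞ φ(t) dt`. -/
def Kmat (d : ℕ) (φ : Fin d → Fin d → ℝ → ℝ) : Matrix (Fin d) (Fin d) ℝ :=
  Matrix.of fun i j => ∫ t in Ioi (0 : ℝ), φ i j t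

/-- Assumption (A1): the kernels are integrable and the spectral radius of `K`
is strictly less than one. -/
def A1 (d : ℕ) (φ : Fin d → Fin d → ℝ → ℝ) : Prop :=
  (∀ i j, IntegrableOn (φ i j) (Ioi 0)) ∧
    spectralRadius ℂ ((Kmat d φ).map fun x : ℝ => (x : ℂ)) < 1

/-- The diagonal matrix `Σ` with `Σ_{ii} = ((Id−K)⁻¹ μ)_i`. -/
def SigMat (d : ℕ) (φ : Fin d → Fin d → ℝ → ℝ) (μ : Fin d → ℝ) :
    Matrix (Fin d) (Fin d) ℝ :=
  Matrix.diagonal fun i => (1 - Kmat d φ)⁻¹.mulVec μ i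

/-- The `(i,k)` entry of the matrix-valued measure `Id δ₀(ds) + ψ(s) ds` on `[0,∞)`. -/
def rowMeas (d : ℕ) (φ : Fin d → Fin d → ℝ → ℝ) (i k : Fin d) : Measure ℝ :=
  (if i = k then Measure.dirac 0 else 0) +
    (volume.restrict (Ioi 0)).withDensity fun s => ENNReal.ofReal (psiFun d φ i k s)

/-- The matrix `v_{Δ,τ} = ∫_{[0,∞)²} (1 − |t−s−τ|/Δ)⁺
(Id δ₀(ds) + ψ(s) ds) Σ (Id δ₀(dt) + ψ(t)ᵀ dt)`. -/
def vMat (d : ℕ) (φ : Fin d → Fin d → ℝ → ℝ) (μ : Fin d → ℝ) (Δ τ : ℝ) :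
    Matrix (Fin d) (Fin d) ℝ :=
  Matrix.of fun i j => ∑ k, ∑ l, SigMat d φ μ k l *
    ∫ s, (∫ t, max (1 - |t - s - τ| / Δ) 0 ∂(rowMeas d φ j l)) ∂(rowMeas d φ i k)

open scoped ENNReal

theorem summable_pow_of_spectralRadius_lt_one {A : Type*} [NormedRing A] [NormedAlgebra ℂ A]
    [CompleteSpace A] {a : A} (h : spectralRadius ℂ a < 1) : Summable (a ^ ·) := by
  obtain ⟨r, hρr, hr1⟩ := ENNReal.lt_iff_exists_nnreal_btwn.mp h
  refine .of_norm_bounded_eventually_nat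
    (summable_geometric_of_lt_one r.coe_nonneg (by exact_mod_cast hr1)) ?_
  have hgelfand := spectrum.pow_nnnorm_pow_one_div_tendsto_nhds_spectralRadius a
  filter_upwards [hgelfand.eventually_lt_const hρr, eventually_ge_atTop 1] with n hn hn1
  rw [one_div, ENNReal.rpow_inv_lt_iff (by positivity), ENNReal.rpow_natCast] at hn
  exact_mod_cast hn.le

theorem Matrix.summable_pow_of_spectralRadius_lt_one {n : Type*} [Fintype n] [DecidableEq n]
    {K : Matrix n n ℝ} (h : spectralRadius ℂ (K.map ((↑) : ℝ → ℂ)) < 1) : Summable (K ^ ·) := by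
  let _ : NormedRing (Matrix n n ℂ) := Matrix.linftyOpNormedRing
  let _ : NormedAlgebra ℂ (Matrix n n ℂ) := Matrix.linftyOpNormedAlgebra
  have hre := (_root_.summable_pow_of_spectralRadius_lt_one h).map
    Complex.reAddGroupHom.mapMatrix (continuous_id.matrix_map Complex.continuous_re)
  convert hre using 1
  ext m i j
  have hpow : K.map ((↑) : ℝ → ℂ) ^ m = Complex.ofRealHom.mapMatrix (K ^ m) := by
    rw [map_pow]; rfl
  simp [hpow]

theorem Matrix.hasSum_pow_of_spectralRadius_lt_one {n : Type*} [Fintype n] [DecidableEq n]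
    {K : Matrix n n ℝ} (h : spectralRadius ℂ (K.map ((↑) : ℝ → ℂ)) < 1) :
    HasSum (K ^ ·) (1 - K)⁻¹ := by
  have hK := Matrix.summable_pow_of_spectralRadius_lt_one h
  rw [Matrix.inv_eq_left_inv hK.tsum_pow_mul_one_sub]
  exact hK.hasSum

theorem Matrix.mul_mul_transpose_apply {n R : Type*} [Fintype n] [CommSemiring R]
    (A B C : Matrix n n R) (i j : n) :
    (A * B * C.transpose) i j = ∑ k, ∑ l, B k l * (A i k * C j l) := by
  simp only [Matrix.mul_apply, Matrix.transpose_apply, Finset.sum_mul]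
  rw [Finset.sum_comm]
  exact Finset.sum_congr rfl fun k _ => Finset.sum_congr rfl fun l _ => by ring

theorem lintegral_Ioi_lintegral_Ioc_sub_mul {F G : ℝ → ℝ≥0∞} (hF : Measurable F)
    (hG : Measurable G) :
    ∫⁻ t in Ioi 0, ∫⁻ s in Ioc 0 t, F (t - s) * G s =
      (∫⁻ u in Ioi 0, F u) * ∫⁻ s in Ioi 0, G s := by
  set H : ℝ → ℝ → ℝ≥0∞ := fun t s => (Ici 0).indicator F (t - s) * (Ioi 0).indicator G s
  have hFi : Measurable ((Ici (0 : ℝ)).indicator F) := hF.indicator measurableSet_Ici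
  have hH : Measurable (Function.uncurry H) :=
    (hFi.comp (measurable_fst.sub measurable_snd)).mul
      ((hG.indicator measurableSet_Ioi).comp measurable_snd)
  have hsupp : Function.support (fun t => ∫⁻ s, H t s) ⊆ Ioi 0 := by
    intro t ht
    by_contra hle
    refine ht (lintegral_eq_zero_of_ae_eq_zero (.of_forall fun s => ?_))
    by_cases h : 0 < s <;> by_cases h' : s ≤ t <;> simp [H, h, h']
    exact absurd (h.trans_le h') hle
  calc ∫⁻ t in Ioi 0, ∫⁻ s in Ioc 0 t, F (t - s) * G s
      = ∫⁻ t in Ioi 0, ∫⁻ s, H t s := by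
        refine setLIntegral_congr_fun measurableSet_Ioi fun t _ => ?_
        rw [← lintegral_indicator measurableSet_Ioc]
        congr 1 with s
        by_cases h : 0 < s <;> by_cases h' : s ≤ t <;> simp [H, h, h']
    _ = ∫⁻ s, ∫⁻ t, H t s := by
        rw [setLIntegral_eq_of_support_subset hsupp, lintegral_lintegral_swap hH.aemeasurable]
    _ = ∫⁻ s, (Ioi 0).indicator G s * ∫⁻ u, (Ici 0).indicator F u := by
        congr 1 with s
        simp only [H]
        rw [lintegral_mul_const (f := fun t => (Ici 0).indicator F (t - s)) _
          (hFi.comp (measurable_sub_const s)), mul_comm]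
        congr 1
        exact lintegral_sub_right_eq_self _ s
    _ = (∫⁻ u in Ioi 0, F u) * ∫⁻ s in Ioi 0, G s := by
        rw [lintegral_mul_const _ (hG.indicator measurableSet_Ioi),
          lintegral_indicator measurableSet_Ici, lintegral_indicator measurableSet_Ioi,
          restrict_Ioi_eq_restrict_Ici, mul_comm]

theorem measurable_lintegral_Ioc_sub_mul {F G : ℝ → ℝ≥0∞} (hF : Measurable F)
    (hG : Measurable G) : Measurable fun t => ∫⁻ s in Ioc 0 t, F (t - s) * G s := by
  have hset : MeasurableSet {p : ℝ × ℝ | p.2 ∈ Ioc 0 p.1} :=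
    (measurable_snd measurableSet_Ioi).inter (measurableSet_le measurable_snd measurable_fst)
  have := ((hF.comp (measurable_fst.sub measurable_snd)).mul
    (hG.comp measurable_snd)).indicator hset |>.lintegral_prod_right' (ν := volume)
  convert this using 2 with t
  rw [← lintegral_indicator measurableSet_Ioc]
  rfl

theorem integral_Ioc_sub_mul_eq_toReal {f g : ℝ → ℝ} (hf : ∀ x, 0 ≤ f x) (hg : ∀ x, 0 ≤ g x)
    (hfm : Measurable f) (hgm : Measurable g) (t : ℝ) :
    ∫ s in Ioc 0 t, f (t - s) * g s =
      (∫⁻ s in Ioc 0 t, ENNReal.ofReal (f (t - s)) * ENNReal.ofReal (g s)).toReal := by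
  rw [integral_eq_lintegral_of_nonneg_ae (.of_forall fun s => mul_nonneg (hf _) (hg s))
    (by fun_prop : Measurable fun s => f (t - s) * g s).aestronglyMeasurable]
  simp_rw [ENNReal.ofReal_mul (hf _)]

theorem measurable_integral_Ioc_sub_mul {f g : ℝ → ℝ} (hf : ∀ x, 0 ≤ f x) (hg : ∀ x, 0 ≤ g x)
    (hfm : Measurable f) (hgm : Measurable g) :
    Measurable fun t => ∫ s in Ioc 0 t, f (t - s) * g s := by
  simp_rw [integral_Ioc_sub_mul_eq_toReal hf hg hfm hgm]
  exact (measurable_lintegral_Ioc_sub_mul hfm.ennreal_ofReal hgm.ennreal_ofReal).ennreal_toReal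

theorem lintegral_Ioi_ofReal_integral_Ioc_sub_mul {f g : ℝ → ℝ} (hf : ∀ x, 0 ≤ f x)
    (hg : ∀ x, 0 ≤ g x) (hfm : Measurable f) (hgm : Measurable g)
    (hfin : (∫⁻ u in Ioi 0, ENNReal.ofReal (f u)) * ∫⁻ s in Ioi 0, ENNReal.ofReal (g s) ≠ ∞) :
    ∫⁻ t in Ioi 0, ENNReal.ofReal (∫ s in Ioc 0 t, f (t - s) * g s) =
      (∫⁻ u in Ioi 0, ENNReal.ofReal (f u)) * ∫⁻ s in Ioi 0, ENNReal.ofReal (g s) := by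
  have hconv := lintegral_Ioi_lintegral_Ioc_sub_mul hfm.ennreal_ofReal hgm.ennreal_ofReal
  simp_rw [integral_Ioc_sub_mul_eq_toReal hf hg hfm hgm]
  rw [← hconv] at hfin ⊢
  refine lintegral_congr_ae (ofReal_toReal_ae_eq (ae_lt_top ?_ hfin))
  exact measurable_lintegral_Ioc_sub_mul hfm.ennreal_ofReal hgm.ennreal_ofReal

def tent (Δ x : ℝ) : ℝ := max (1 - |x| / Δ) 0

theorem continuous_tent (Δ : ℝ) : Continuous (tent Δ) := by
  unfold tent; fun_prop

theorem norm_tent_le_one {Δ : ℝ} (hΔ : 0 ≤ Δ) (x : ℝ) : ‖tent Δ x‖ ≤ 1 := by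
  unfold tent
  rw [Real.norm_of_nonneg (le_max_right _ _)]
  exact max_le (sub_le_self _ (by positivity)) zero_le_one

theorem tendsto_tent_atTop (x : ℝ) : Tendsto (fun Δ => tent Δ x) atTop (𝓝 1) := by
  have h := ((tendsto_const_nhds (x := (1 : ℝ))).sub
    (tendsto_const_nhds (x := |x|).div_atTop tendsto_id)).max (tendsto_const_nhds (x := (0 : ℝ)))
  simpa [tent] using h

theorem tendsto_tent_nhdsGT_zero {x : ℝ} (hx : x ≠ 0) :
    Tendsto (fun Δ => tent Δ x) (𝓝[>] 0) (𝓝 0) := by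
  refine tendsto_const_nhds.congr' ?_
  filter_upwards [Ioo_mem_nhdsGT (abs_pos.mpr hx)] with Δ hΔ
  have : 1 ≤ |x| / Δ := (one_le_div hΔ.1).mpr hΔ.2.le
  exact (max_eq_right (by linarith)).symm

section TentIntegral

variable {μ ν : Measure ℝ} [IsFiniteMeasure μ] [IsFiniteMeasure ν] {τ : ℝ}

theorem tendsto_integral_integral_tent {l : Filter ℝ} [l.IsCountablyGenerated]
    (hl : ∀ᶠ Δ in l, 0 ≤ Δ) {g : ℝ × ℝ → ℝ}
    (hg : ∀ᵐ p ∂μ.prod ν, Tendsto (fun Δ => tent Δ (p.2 - p.1 - τ)) l (𝓝 (g p))) :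
    Tendsto (fun Δ => ∫ s, ∫ t, tent Δ (t - s - τ) ∂ν ∂μ) l (𝓝 (∫ p, g p ∂μ.prod ν)) := by
  have hmeas (Δ : ℝ) : AEStronglyMeasurable (fun p : ℝ × ℝ => tent Δ (p.2 - p.1 - τ)) (μ.prod ν) :=
    ((continuous_tent Δ).comp (by fun_prop)).aestronglyMeasurable
  have hbound : ∀ᶠ Δ in l, ∀ᵐ p ∂μ.prod ν, ‖tent Δ (p.2 - p.1 - τ)‖ ≤ 1 :=
    hl.mono fun Δ hΔ => .of_forall fun p => norm_tent_le_one hΔ _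
  refine (tendsto_integral_filter_of_dominated_convergence _ (.of_forall hmeas) hbound
    (integrable_const 1) hg).congr' ?_
  filter_upwards [hbound] with Δ hΔ
  exact (integral_integral (f := fun s t => tent Δ (t - s - τ))
    ((integrable_const 1).mono' (hmeas Δ) hΔ)).symm

theorem tendsto_integral_integral_tent_atTop :
    Tendsto (fun Δ => ∫ s, ∫ t, tent Δ (t - s - τ) ∂ν ∂μ) atTop
      (𝓝 (μ.real univ * ν.real univ)) := by
  have h := tendsto_integral_integral_tent (μ := μ) (ν := ν) (τ := τ) (eventually_ge_atTop 0)
    (.of_forall fun p => tendsto_tent_atTop _)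
  rwa [integral_const, smul_eq_mul, mul_one, measureReal_def, ← univ_prod_univ,
    Measure.prod_prod, ENNReal.toReal_mul] at h

theorem tendsto_integral_integral_tent_nhdsGT_zero (h : ∀ᵐ s ∂μ, ν {s + τ} = 0) :
    Tendsto (fun Δ => ∫ s, ∫ t, tent Δ (t - s - τ) ∂ν ∂μ) (𝓝[>] 0) (𝓝 0) := by
  have hoff : ∀ᵐ p ∂μ.prod ν, p.2 - p.1 - τ ≠ 0 := by
    refine (Measure.ae_prod_iff_ae_ae ((by fun_prop : Measurable fun p : ℝ × ℝ =>
      p.2 - p.1 - τ) (measurableSet_singleton 0).compl)).mpr ?_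
    filter_upwards [h] with s hs
    filter_upwards [measure_eq_zero_iff_ae_notMem.mp hs] with t ht h0
    exact ht (mem_singleton_iff.mpr (by linarith [mem_singleton_iff.mp h0]))
  have h := tendsto_integral_integral_tent (mem_of_superset self_mem_nhdsWithin Ioi_subset_Ici_self)
    (hoff.mono fun p hp => tendsto_tent_nhdsGT_zero hp)
  rwa [integral_zero] at h

end TentIntegral

section Hawkes

variable {d : ℕ} {φ : Fin d → Fin d → ℝ → ℝ}

theorem Kmat_apply_nonneg (hφnonneg : ∀ i j t, 0 ≤ φ i j t) (i j : Fin d) : 0 ≤ Kmat d φ i j :=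
  setIntegral_nonneg measurableSet_Ioi fun t _ => hφnonneg i j t

theorem phiIter_nonneg (hφnonneg : ∀ i j t, 0 ≤ φ i j t) (n : ℕ) (i j : Fin d) (t : ℝ) :
    0 ≤ phiIter d φ n i j t := by
  induction n generalizing i j t with
  | zero => exact hφnonneg i j t
  | succ n ih =>
    exact Finset.sum_nonneg fun k _ => setIntegral_nonneg measurableSet_Ioc fun s _ =>
      mul_nonneg (hφnonneg i k _) (ih k j s)

theorem measurable_phiIter (hφmeas : ∀ i j, Measurable (φ i j))
    (hφnonneg : ∀ i j t, 0 ≤ φ i j t) (n : ℕ) (i j : Fin d) :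
    Measurable (phiIter d φ n i j) := by
  induction n generalizing i j with
  | zero => exact hφmeas i j
  | succ n ih =>
    exact Finset.measurable_sum _ fun k _ => measurable_integral_Ioc_sub_mul (hφnonneg i k)
      (phiIter_nonneg hφnonneg n k j) (hφmeas i k) (ih k j)

theorem lintegral_phiIter (hφmeas : ∀ i j, Measurable (φ i j))
    (hφnonneg : ∀ i j t, 0 ≤ φ i j t) (hφint : ∀ i j, IntegrableOn (φ i j) (Ioi 0))
    (n : ℕ) (i j : Fin d) :
    ∫⁻ t in Ioi 0, ENNReal.ofReal (phiIter d φ n i j t) =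
      ENNReal.ofReal ((Kmat d φ ^ (n + 1)) i j) := by
  have hK : ∀ i j, ∫⁻ t in Ioi 0, ENNReal.ofReal (φ i j t) = ENNReal.ofReal (Kmat d φ i j) :=
    fun i j => (ofReal_integral_eq_lintegral_ofReal (hφint i j) (.of_forall (hφnonneg i j))).symm
  have hKpow := Matrix.pow_apply_nonneg (Kmat_apply_nonneg hφnonneg)
  induction n generalizing i j with
  | zero => rw [zero_add, pow_one]; exact hK i j
  | succ n ih =>
    have hterm : ∀ k, ∫⁻ t in Ioi 0,
        ENNReal.ofReal (∫ s in Ioc 0 t, φ i k (t - s) * phiIter d φ n k j s) =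
          ENNReal.ofReal (Kmat d φ i k * (Kmat d φ ^ (n + 1)) k j) := fun k => by
      rw [lintegral_Ioi_ofReal_integral_Ioc_sub_mul (hφnonneg i k) (phiIter_nonneg hφnonneg n k j)
        (hφmeas i k) (measurable_phiIter hφmeas hφnonneg n k j), hK, ih,
        ENNReal.ofReal_mul (Kmat_apply_nonneg hφnonneg i k)]
      · rw [hK, ih]; exact ENNReal.mul_ne_top ENNReal.ofReal_ne_top ENNReal.ofReal_ne_top
    calc ∫⁻ t in Ioi 0, ENNReal.ofReal (phiIter d φ (n + 1) i j t)
        = ∑ k, ∫⁻ t in Ioi 0,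
            ENNReal.ofReal (∫ s in Ioc 0 t, φ i k (t - s) * phiIter d φ n k j s) := by
          simp_rw [phiIter, ENNReal.ofReal_sum_of_nonneg fun k _ =>
            setIntegral_nonneg measurableSet_Ioc fun s _ =>
              mul_nonneg (hφnonneg i k _) (phiIter_nonneg hφnonneg n k j s)]
          exact lintegral_finsetSum _ fun k _ => (measurable_integral_Ioc_sub_mul (hφnonneg i k)
            (phiIter_nonneg hφnonneg n k j) (hφmeas i k)
            (measurable_phiIter hφmeas hφnonneg n k j)).ennreal_ofReal
      _ = ENNReal.ofReal ((Kmat d φ ^ (n + 1 + 1)) i j) := by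
          rw [pow_succ' _ (n + 1), Matrix.mul_apply, ENNReal.ofReal_sum_of_nonneg fun k _ =>
            mul_nonneg (Kmat_apply_nonneg hφnonneg i k) (hKpow _ k j)]
          exact Finset.sum_congr rfl fun k _ => hterm k

theorem hasSum_Kmat_pow_apply (hA1 : A1 d φ) (i j : Fin d) :
    HasSum (fun n => (Kmat d φ ^ n) i j) ((1 - Kmat d φ)⁻¹ i j) :=
  Pi.hasSum.mp (Pi.hasSum.mp (Matrix.hasSum_pow_of_spectralRadius_lt_one hA1.2) i) j

theorem lintegral_psiFun (hφmeas : ∀ i j, Measurable (φ i j))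
    (hφnonneg : ∀ i j t, 0 ≤ φ i j t) (hA1 : A1 d φ) (i j : Fin d) :
    ∫⁻ t in Ioi 0, ENNReal.ofReal (psiFun d φ i j t) =
      ∑' n, ENNReal.ofReal ((Kmat d φ ^ (n + 1)) i j) := by
  set G : ℝ → ℝ≥0∞ := fun t => ∑' n, ENNReal.ofReal (phiIter d φ n i j t)
  have hGm : Measurable G :=
    .tsum fun n => (measurable_phiIter hφmeas hφnonneg n i j).ennreal_ofReal
  have hG : ∫⁻ t in Ioi 0, G t = ∑' n, ENNReal.ofReal ((Kmat d φ ^ (n + 1)) i j) := by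
    rw [lintegral_tsum fun n =>
      (measurable_phiIter hφmeas hφnonneg n i j).ennreal_ofReal.aemeasurable]
    simp_rw [lintegral_phiIter hφmeas hφnonneg hA1.1]
  have hGfin : ∫⁻ t in Ioi 0, G t ≠ ∞ := by
    rw [hG, ← ENNReal.ofReal_tsum_of_nonneg
      (fun n => Matrix.pow_apply_nonneg (Kmat_apply_nonneg hφnonneg) _ i j)
      ((summable_nat_add_iff 1).mpr (hasSum_Kmat_pow_apply hA1 i j).summable)]
    exact ENNReal.ofReal_ne_top
  -- the real series `psiFun` is recovered from `G` even where it diverges: both sides are then `0`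
  have hψ : ∀ t, psiFun d φ i j t = (G t).toReal := fun t => by
    rw [ENNReal.tsum_toReal_eq fun n => ENNReal.ofReal_ne_top]
    simp_rw [ENNReal.toReal_ofReal (phiIter_nonneg hφnonneg _ i j t)]
    rfl
  simp_rw [hψ]
  rw [lintegral_congr_ae (ofReal_toReal_ae_eq (ae_lt_top hGm hGfin)), hG]

theorem rowMeas_univ (hφmeas : ∀ i j, Measurable (φ i j))
    (hφnonneg : ∀ i j t, 0 ≤ φ i j t) (hA1 : A1 d φ) (i k : Fin d) :
    rowMeas d φ i k univ = ENNReal.ofReal ((1 - Kmat d φ)⁻¹ i k) := by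
  have hKpow := Matrix.pow_apply_nonneg (Kmat_apply_nonneg hφnonneg)
  have hneumann : ENNReal.ofReal ((1 - Kmat d φ)⁻¹ i k) =
      ∑' n, ENNReal.ofReal ((Kmat d φ ^ n) i k) := by
    rw [← (hasSum_Kmat_pow_apply hA1 i k).tsum_eq,
      ENNReal.ofReal_tsum_of_nonneg (fun n => hKpow n i k) (hasSum_Kmat_pow_apply hA1 i k).summable]
  rw [hneumann, tsum_eq_zero_add' ENNReal.summable, rowMeas, Measure.add_apply,
    withDensity_apply _ MeasurableSet.univ, Measure.restrict_univ,
    lintegral_psiFun hφmeas hφnonneg hA1, pow_zero]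
  congr 1
  rcases eq_or_ne i k with rfl | h
  · simp
  · simp [h, Matrix.one_apply_ne h]

theorem isFiniteMeasure_rowMeas (hφmeas : ∀ i j, Measurable (φ i j))
    (hφnonneg : ∀ i j t, 0 ≤ φ i j t) (hA1 : A1 d φ) (i k : Fin d) :
    IsFiniteMeasure (rowMeas d φ i k) :=
  ⟨by simp [rowMeas_univ hφmeas hφnonneg hA1]⟩

theorem measureReal_rowMeas_univ (hφmeas : ∀ i j, Measurable (φ i j))
    (hφnonneg : ∀ i j t, 0 ≤ φ i j t) (hA1 : A1 d φ) (i k : Fin d) :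
    (rowMeas d φ i k).real univ = (1 - Kmat d φ)⁻¹ i k := by
  rw [measureReal_def, rowMeas_univ hφmeas hφnonneg hA1, ENNReal.toReal_ofReal]
  exact (hasSum_Kmat_pow_apply hA1 i k).nonneg
    fun n => Matrix.pow_apply_nonneg (Kmat_apply_nonneg hφnonneg) n i k

theorem rowMeas_singleton {x : ℝ} (hx : x ≠ 0) (i k : Fin d) : rowMeas d φ i k {x} = 0 := by
  have hvol : volume.restrict (Ioi (0 : ℝ)) {x} = 0 :=
    le_zero_iff.mp ((Measure.restrict_apply_le _ _).trans (measure_singleton x).le)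
  have hdirac : (if i = k then Measure.dirac (0 : ℝ) else 0) {x} = 0 := by
    split_ifs <;> simp [hx]
  simp [rowMeas, hdirac, withDensity_apply _ (measurableSet_singleton x)]

theorem vMat_apply (d : ℕ) (φ : Fin d → Fin d → ℝ → ℝ) (μ : Fin d → ℝ) (Δ τ : ℝ) (i j : Fin d) :
    vMat d φ μ Δ τ i j = ∑ k, ∑ l, SigMat d φ μ k l *
      ∫ s, ∫ t, tent Δ (t - s - τ) ∂(rowMeas d φ j l) ∂(rowMeas d φ i k) :=
  rfl

end Hawkes

theorem vMat_limits (d : ℕ) (φ : Fin d → Fin d → ℝ → ℝ)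
    (hφmeas : ∀ i j, Measurable (φ i j)) (hφnonneg : ∀ i j t, 0 ≤ φ i j t)
    (hA1 : A1 d φ) (μ : Fin d → ℝ) :
    (∀ τ : ℝ, ∀ i j, Tendsto (fun Δ : ℝ => vMat d φ μ Δ τ i j) atTop
      (𝓝 (((1 - Kmat d φ)⁻¹ * SigMat d φ μ * ((1 - Kmat d φ)⁻¹).transpose) i j))) ∧
    (∀ τ : ℝ, τ ≠ 0 → ∀ i j,
      Tendsto (fun Δ : ℝ => vMat d φ μ Δ τ i j) (𝓝[>] 0) (𝓝 0)) := by
  have := isFiniteMeasure_rowMeas hφmeas hφnonneg hA1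
  refine ⟨fun τ i j => ?_, fun τ hτ i j => ?_⟩ <;> simp only [vMat_apply]
  · rw [Matrix.mul_mul_transpose_apply]
    refine tendsto_finsetSum _ fun k _ => tendsto_finsetSum _ fun l _ => .const_mul _ ?_
    simpa only [measureReal_rowMeas_univ hφmeas hφnonneg hA1] using
      tendsto_integral_integral_tent_atTop (μ := rowMeas d φ i k) (ν := rowMeas d φ j l) (τ := τ)
  · have hnull (k l : Fin d) : ∀ᵐ s ∂rowMeas d φ i k, rowMeas d φ j l {s + τ} = 0 := by
      filter_upwards [measure_eq_zero_iff_ae_notMem.mp (rowMeas_singleton (neg_ne_zero.mpr hτ) i k)]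
        with s hs
      exact rowMeas_singleton (fun h => hs (eq_neg_of_add_eq_zero_left h)) j l
    simpa using tendsto_finsetSum _ fun k _ => tendsto_finsetSum _ fun l _ =>
      (tendsto_integral_integral_tent_nhdsGT_zero (hnull k l)).const_mul (SigMat d φ μ k l)
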